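/- arXiv:1901.10727 — 2 statements merged into one kernel-verified Lean document; each statement's English description precedes it below -/
import Mathlib

section
/- Let κ be a cardinal of uncountable cofinality and let X be a subspace of the Sorgenfrey line ℝₗ such that the square X × X (with the product topology) contains a discrete subspace Γ ⊆ X × X of cardinality |Γ| = κ. If a topological group G contains a subspace homeomorphic to X, then G contains a discrete subspace of cardinality κ. -/
open Set Topology

def SorgenfreyLine : Type := ℝ

notation "ℝₗ" => SorgenfreyLine

noncomputable instance : Field ℝₗ := inferInstanceAs (Field ℝ)

noncomputable instance : LinearOrder ℝₗ := inferInstanceAs (LinearOrder ℝ)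

instance : IsStrictOrderedRing ℝₗ := inferInstanceAs (IsStrictOrderedRing ℝ)

instance : TopologicalSpace ℝₗ :=
  TopologicalSpace.generateFrom {s : Set ℝₗ | ∃ a b : ℝₗ, a < b ∧ s = Set.Ico a b}

/-- The spread of a topological space: the supremum of cardinalities of discrete subspaces. -/
noncomputable def spread (X : Type*) [TopologicalSpace X] : Cardinal :=
  sSup {c : Cardinal | ∃ D : Set X, DiscreteTopology D ∧ Cardinal.mk D = c}

def Cometrizable (Y : Type*) [t : TopologicalSpace Y] : Prop :=
  ∃ τ : TopologicalSpace Y, t ≤ τ ∧ @TopologicalSpace.MetrizableSpace Y τ ∧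
    ∀ y : Y, ∀ U ∈ nhds y, ∃ V ∈ nhds y, V ⊆ U ∧ IsClosed[τ] V

def IsKDense {X : Type*} [TopologicalSpace X] (D : Set X) : Prop :=
  ∀ K : Set X, IsCompact K → ∃ K' : Set X, IsCompact K' ∧ K ⊆ K' ∧ K' ⊆ closure (D ∩ K')

def KSeparable (X : Type*) [TopologicalSpace X] : Prop :=
  ∃ D : Set X, D.Countable ∧ IsKDense D

/-!
Let `g : X → G` be the embedding and `Γ ⊆ X × X` the discrete set. Discreteness in the Sorgenfrey
square isolates each `p ∈ Γ` in a box `[p₁, p₁ + ε) × [p₂, p₂ + ε)`; since `cof κ > ℵ₀`, a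
pigeonhole argument over countably many grid cells shrinks `Γ` to `κ` points forming an antichain for the
coordinatewise order. For such `p`, a point `q` with `g q₁ (g q₂)⁻¹` close to `g p₁ (g p₂)⁻¹` and
one coordinate slightly to the right of that of `p` has, by continuity of the group operations,
its other coordinate to the right of `p`'s as well; the antichain property then forces `q = p`
unless `q` lies far to the right in some coordinate. A second pigeonhole step removes the far points, after which
`q ↦ g q₁ (g q₂)⁻¹` is injective with discrete image.
-/

open Cardinal Filter

universe u

noncomputable instance : FloorRing ℝₗ := inferInstanceAs (FloorRing ℝ)

theorem exists_subset_card_eq_forall_eq {α : Type u} {ι : Type*} [Countable ι] {κ : Cardinal.{u}}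
    (hκ : ℵ₀ < κ.ord.cof) {A : Set α} (hA : #A = κ) (f : α → ι) :
    ∃ B ⊆ A, #B = κ ∧ ∀ p ∈ B, ∀ q ∈ B, f p = f q := by
  obtain ⟨j, hj⟩ := Countable.exists_injective_nat ι
  have hκ₀ : ℵ₀ ≤ κ := hκ.le.trans (Ordinal.cof_ord_le κ)
  obtain ⟨_, B, hBA, hκB, hB⟩ := infinite_pigeonhole_set
    (fun p : A => ULift.up.{u} (j (f p))) κ hA.ge hκ₀ (by simpa using hκ)
  refine ⟨B, hBA, le_antisymm ((mk_le_mk_of_subset hBA).trans hA.le) hκB, fun p hp q hq => ?_⟩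
  exact hj (congrArg ULift.down ((hB hp).trans (hB hq).symm))

theorem lt_add_inv_of_floor_mul_eq {K : Type*} [Field K] [LinearOrder K] [IsStrictOrderedRing K]
    [FloorRing K] {a b c : K} (hc : 0 < c) (h : ⌊a * c⌋ = ⌊b * c⌋) : b < a + c⁻¹ := by
  have hlt := (abs_sub_lt_iff.1 (Int.abs_sub_lt_one_of_floor_eq_floor h)).2
  rw [← sub_mul, ← lt_div_iff₀ hc, one_div] at hlt
  linarith

theorem exists_subset_card_eq_forall_lt_add {α : Type u} {K : Type*} [Field K] [LinearOrder K]
    [IsStrictOrderedRing K] [FloorRing K] {κ : Cardinal.{u}} (hκ : ℵ₀ < κ.ord.cof) {A : Set α}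
    (hA : #A = κ) (x y r : α → K) (hr : ∀ p ∈ A, 0 < r p) :
    ∃ B ⊆ A, #B = κ ∧ ∀ p ∈ B, ∀ q ∈ B, x q < x p + r p ∧ y q < y p + r p := by
  -- Pigeonhole on the mesh `1 / n p ≤ r p` and on the cell of `p` in the grid of that mesh.
  set n : α → ℕ := fun p => ⌈(r p)⁻¹⌉₊
  obtain ⟨B, hBA, hBκ, hB⟩ := exists_subset_card_eq_forall_eq hκ hA
    fun p => (n p, ⌊x p * n p⌋, ⌊y p * n p⌋)
  refine ⟨B, hBA, hBκ, fun p hp q hq => ?_⟩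
  obtain ⟨hn, hx, hy⟩ : n p = n q ∧ _ ∧ _ := by simpa only [Prod.mk.injEq] using hB p hp q hq
  rw [← hn] at hx hy
  have hrp := hr p (hBA hp)
  have hrn : (r p)⁻¹ ≤ n p := Nat.le_ceil _
  have hn₀ : (0 : K) < n p := (inv_pos.2 hrp).trans_le hrn
  have hmesh : (n p : K)⁻¹ ≤ r p := inv_le_of_inv_le₀ hrp hrn
  constructor <;> linarith [lt_add_inv_of_floor_mul_eq hn₀ hx, lt_add_inv_of_floor_mul_eq hn₀ hy]

namespace SorgenfreyLine

theorem isTopologicalBasis_Ico :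
    TopologicalSpace.IsTopologicalBasis {s : Set ℝₗ | ∃ a b : ℝₗ, a < b ∧ s = Ico a b} where
  exists_subset_inter := by
    rintro _ ⟨a, b, -, rfl⟩ _ ⟨c, d, -, rfl⟩ x hx
    obtain ⟨⟨hax, hxb⟩, hcx, hxd⟩ := hx
    exact ⟨Ico a b ∩ Ico c d, ⟨max a c, min b d,
      max_lt (lt_min (by linarith) (by linarith)) (lt_min (by linarith) (by linarith)),
      Ico_inter_Ico⟩, ⟨⟨hax, hxb⟩, hcx, hxd⟩, subset_rfl⟩
  sUnion_eq := eq_univ_of_forall fun x => ⟨Ico x (x + 1), ⟨x, x + 1, by linarith, rfl⟩,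
    left_mem_Ico.2 (by linarith)⟩
  eq_generateFrom := rfl

theorem nhds_basis_Ico (x : ℝₗ) : (𝓝 x).HasBasis (0 < ·) (fun δ => Ico x (x + δ)) := by
  refine isTopologicalBasis_Ico.nhds_hasBasis.to_hasBasis ?_ fun δ hδ => ?_
  · rintro _ ⟨⟨a, b, -, rfl⟩, hx⟩
    exact ⟨b - x, sub_pos.2 hx.2, Ico_subset_Ico hx.1 (by linarith)⟩
  · exact ⟨Ico x (x + δ), ⟨⟨x, x + δ, by linarith, rfl⟩, left_mem_Ico.2 (by linarith)⟩, subset_rfl⟩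

theorem nhds_subtype_basis_Ico {X : Set ℝₗ} (x : X) :
    (𝓝 x).HasBasis (0 < ·) (fun δ => Subtype.val ⁻¹' Ico (x : ℝₗ) (x + δ)) := by
  rw [nhds_subtype]
  exact (nhds_basis_Ico x).comap _

theorem nhds_prod_subtype_basis_Ico {X : Set ℝₗ} (p : X × X) :
    (𝓝 p).HasBasis (0 < ·) (fun δ => (Subtype.val ⁻¹' Ico (p.1 : ℝₗ) (p.1 + δ)) ×ˢ
      (Subtype.val ⁻¹' Ico (p.2 : ℝₗ) (p.2 + δ))) := by
  rw [nhds_prod_eq]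
  refine (nhds_subtype_basis_Ico p.1).prod_same_index_mono (nhds_subtype_basis_Ico p.2) ?_ ?_ <;>
  exact fun δ _ ε _ hδε => preimage_mono (Ico_subset_Ico_right (by linarith))

theorem Ici_subtype_mem_nhds {X : Set ℝₗ} (x : X) : Ici x ∈ 𝓝 x :=
  (nhds_subtype_basis_Ico x).mem_iff.2 ⟨1, one_pos, fun _ hy => hy.1⟩

end SorgenfreyLine

open SorgenfreyLine

theorem exists_isAntichain_subset_card_eq {κ : Cardinal.{0}} (hκ : ℵ₀ < κ.ord.cof) {X : Set ℝₗ}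
    {Γ : Set (X × X)} (hΓ : DiscreteTopology Γ) (hΓκ : #Γ = κ) :
    ∃ A ⊆ Γ, #A = κ ∧ IsAntichain (· ≤ ·) A := by
  have hbox : ∀ p ∈ Γ, ∃ ε > (0 : ℝₗ), ∀ q ∈ Γ, p ≤ q →
      (q.1 : ℝₗ) < p.1 + ε → (q.2 : ℝₗ) < p.2 + ε → q = p := by
    intro p hp
    obtain ⟨U, hU, hUΓ⟩ := discreteTopology_subtype_iff'.1 hΓ p hp
    obtain ⟨ε, hε, hεU⟩ := (nhds_prod_subtype_basis_Ico p).mem_iff.1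
      (hU.mem_nhds (hUΓ.ge rfl).1)
    refine ⟨ε, hε, fun q hq hpq h₁ h₂ => ?_⟩
    have hqUΓ : q ∈ U ∩ Γ := ⟨hεU ⟨⟨hpq.1, h₁⟩, hpq.2, h₂⟩, hq⟩
    rwa [hUΓ] at hqUΓ
  choose! ε hε hεΓ using hbox
  obtain ⟨A, hAΓ, hAκ, hA⟩ := exists_subset_card_eq_forall_lt_add hκ hΓκ
    (fun p => (p.1 : ℝₗ)) (fun p => (p.2 : ℝₗ)) ε hε
  exact ⟨A, hAΓ, hAκ, fun p hp q hq hne hpq =>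
    hne (hεΓ p (hAΓ hp) q (hAΓ hq) hpq (hA p hp q hq).1 (hA p hp q hq).2).symm⟩

theorem Topology.IsInducing.exists_nhds_mul_inv_imp_mem {G Y : Type*} [Group G]
    [TopologicalSpace G] [ContinuousMul G] [TopologicalSpace Y] {g : Y → G}
    (hg : IsInducing g) {a : Y} (b : Y) {U : Set Y} (hU : U ∈ 𝓝 a) :
    ∃ N ∈ 𝓝 (g a * (g b)⁻¹), ∃ V ∈ 𝓝 b, ∀ a' b', g a' * (g b')⁻¹ ∈ N → b' ∈ V → a' ∈ U := by
  rw [hg.nhds_eq_comap] at hU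
  obtain ⟨P, hP, hPU⟩ := hU
  have hcont : Continuous fun z : G × Y => z.1 * g z.2 :=
    continuous_fst.mul (hg.continuous.comp continuous_snd)
  have hmem : (fun z : G × Y => z.1 * g z.2) ⁻¹' P ∈ 𝓝 (g a * (g b)⁻¹) ×ˢ 𝓝 b := by
    rw [← nhds_prod_eq]
    exact hcont.continuousAt.preimage_mem_nhds (by simpa using hP)
  obtain ⟨N, hN, V, hV, hNV⟩ := mem_prod_iff.1 hmem
  exact ⟨N, hN, V, hV, fun a' b' ha' hb' => hPU (by simpa using hNV (mk_mem_prod ha' hb'))⟩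

theorem exists_nhds_mul_inv_eq_of_lt_add {G : Type*} [Group G] [TopologicalSpace G]
    [IsTopologicalGroup G] {X : Set ℝₗ} {g : X → G} (hg : IsInducing g) {A : Set (X × X)}
    (hA : IsAntichain (· ≤ ·) A) {p : X × X} (hp : p ∈ A) :
    ∃ ρ > (0 : ℝₗ), ∃ N ∈ 𝓝 (g p.1 * (g p.2)⁻¹), ∀ q ∈ A, g q.1 * (g q.2)⁻¹ ∈ N →
      (q.1 : ℝₗ) < p.1 + ρ → (q.2 : ℝₗ) < p.2 + ρ → q = p := by
  obtain ⟨N₁, hN₁, V₁, hV₁, h₁⟩ := hg.exists_nhds_mul_inv_imp_mem p.2 (Ici_subtype_mem_nhds p.1)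
  obtain ⟨N₂, hN₂, V₂, hV₂, h₂⟩ := hg.exists_nhds_mul_inv_imp_mem p.1 (Ici_subtype_mem_nhds p.2)
  obtain ⟨δ₁, hδ₁, hδV₁⟩ := (nhds_subtype_basis_Ico p.2).mem_iff.1 hV₁
  obtain ⟨δ₂, hδ₂, hδV₂⟩ := (nhds_subtype_basis_Ico p.1).mem_iff.1 hV₂
  have hN₂' : (·⁻¹) ⁻¹' N₂ ∈ 𝓝 (g p.1 * (g p.2)⁻¹) :=
    continuous_inv.continuousAt.preimage_mem_nhds (by rwa [mul_inv_rev, inv_inv])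
  refine ⟨min δ₁ δ₂, lt_min hδ₁ hδ₂, N₁ ∩ (·⁻¹) ⁻¹' N₂, inter_mem hN₁ hN₂',
    fun q hq hqN hq₁ hq₂ => ?_⟩
  -- Whenever one coordinate of `q` is to the right of that of `p`, so is the other one.
  have hle₁ (h : p.2 ≤ q.2) : p.1 ≤ q.1 :=
    h₁ q.1 q.2 hqN.1 (hδV₁ ⟨h, hq₂.trans_le (by gcongr; exact min_le_left _ _)⟩)
  have hle₂ (h : p.1 ≤ q.1) : p.2 ≤ q.2 :=
    h₂ q.2 q.1 (by simpa using hqN.2) (hδV₂ ⟨h, hq₁.trans_le (by gcongr; exact min_le_right _ _)⟩)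
  by_cases h : p.1 ≤ q.1
  · exact (hA.eq hp hq ⟨h, hle₂ h⟩).symm
  · exact hA.eq hq hp ⟨(not_le.1 h).le, (not_le.1 (mt hle₁ h)).le⟩

section IsolatedImage

variable {α Y : Type*} [TopologicalSpace Y] {f : α → Y} {A : Set α}

theorem injOn_of_forall_exists_nhds (h : ∀ p ∈ A, ∃ N ∈ 𝓝 (f p), ∀ q ∈ A, f q ∈ N → q = p) :
    InjOn f A := fun p hp q hq hpq => by
  obtain ⟨N, hN, hNA⟩ := h p hp
  exact (hNA q hq (hpq ▸ mem_of_mem_nhds hN)).symm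

theorem discreteTopology_image_of_forall_exists_nhds
    (h : ∀ p ∈ A, ∃ N ∈ 𝓝 (f p), ∀ q ∈ A, f q ∈ N → q = p) : DiscreteTopology (f '' A) := by
  refine discreteTopology_subtype_iff'.2 ?_
  rintro _ ⟨p, hp, rfl⟩
  obtain ⟨N, hN, hNA⟩ := h p hp
  obtain ⟨U, hUN, hU, hpU⟩ := mem_nhds_iff.1 hN
  refine ⟨U, hU, Subset.antisymm ?_ (singleton_subset_iff.2 ⟨hpU, mem_image_of_mem f hp⟩)⟩
  rintro _ ⟨hqU, q, hq, rfl⟩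
  rw [hNA q hq (hUN hqU)]
  rfl

end IsolatedImage

/-- Let $\kappa$ be a cardinal of uncountable cofinality and $X$ a subspace of the Sorgenfrey
line whose square contains a discrete subspace of cardinality $\kappa$. If a topological group
$G$ contains a subspace homeomorphic to $X$, then $G$ contains a discrete subspace of
cardinality $\kappa$. -/
theorem discrete_subspace_of_discrete_in_square {G : Type u} [Group G] [TopologicalSpace G]
    [IsTopologicalGroup G] (κ : Cardinal.{0}) (hκ : Cardinal.aleph0 < κ.ord.cof)
    (X : Set ℝₗ) (Γ : Set (X × X)) (hΓ : DiscreteTopology Γ) (hΓκ : Cardinal.mk Γ = κ)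
    (S : Set G) (h : Nonempty (S ≃ₜ X)) :
    ∃ D : Set G, DiscreteTopology D ∧ Cardinal.mk D = Cardinal.lift.{u} κ := by
  obtain ⟨e⟩ := h
  set g : X → G := fun x => e.symm x
  have hg : IsInducing g := IsInducing.subtypeVal.comp e.symm.isInducing
  obtain ⟨A, -, hAκ, hA⟩ := exists_isAntichain_subset_card_eq hκ hΓ hΓκ
  choose! ρ hρ N hN hNA using fun p (hp : p ∈ A) => exists_nhds_mul_inv_eq_of_lt_add hg hA hp
  obtain ⟨B, hBA, hBκ, hB⟩ := exists_subset_card_eq_forall_lt_add hκ hAκ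
    (fun p => (p.1 : ℝₗ)) (fun p => (p.2 : ℝₗ)) ρ hρ
  have hiso : ∀ p ∈ B, ∃ M ∈ 𝓝 (g p.1 * (g p.2)⁻¹), ∀ q ∈ B, g q.1 * (g q.2)⁻¹ ∈ M → q = p :=
    fun p hp => ⟨N p, hN p (hBA hp), fun q hq hqN =>
      hNA p (hBA hp) q (hBA hq) hqN (hB p hp q hq).1 (hB p hp q hq).2⟩
  refine ⟨_, discreteTopology_image_of_forall_exists_nhds hiso, ?_⟩
  have hcard := mk_image_eq_of_injOn_lift _ B (injOn_of_forall_exists_nhds hiso)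
  rwa [lift_uzero, hBκ] at hcard
end

section
/- The set ℚ of rational numbers is k-dense in the Sorgenfrey line ℝₗ: every compact subset K ⊆ ℝₗ is contained in a compact subset K̃ ⊆ ℝₗ such that ℚ ∩ K̃ is dense in K̃ (in the subspace topology of K̃). In particular, the Sorgenfrey line is k-separable. -/
open Set Topology

/-
Every nonempty subset of a compact set `K ⊆ ℝₗ` has a greatest element, so for `x ∈ K` the last
point `y` of `K` in `[x, x + ε)` is followed by a gap of `K`. Putting, for each `n`, one rational
point into every gap `(y, y + 1/(n+1))` of `K` makes the rationals of the enlarged set approach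
each point of `K` from the right. By compactness only finitely many points of `K` have a gap of a
given length, and every open `U ⊇ K` contains all `[x, x + 1/(n+1))`, `x ∈ K`, for one `n`; so
only finitely many added points lie outside `U`, and `K` with the added points is compact.
-/

noncomputable instance : ConditionallyCompleteLinearOrder ℝₗ :=
  inferInstanceAs (ConditionallyCompleteLinearOrder ℝ)

instance : Archimedean ℝₗ := inferInstanceAs (Archimedean ℝ)

theorem isCompact_union_of_finite_diff {X : Type*} [TopologicalSpace X] {K A : Set X}
    (hK : IsCompact K) (hA : ∀ U, IsOpen U → K ⊆ U → (A \ U).Finite) : IsCompact (K ∪ A) := by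
  classical
  refine isCompact_of_finite_subcover fun U hUo hcover => ?_
  obtain ⟨s, hs⟩ := hK.elim_finite_subcover U hUo (subset_union_left.trans hcover)
  obtain ⟨t, ht⟩ := (hA _ (isOpen_biUnion fun i _ => hUo i) hs).isCompact.elim_finite_subcover
    U hUo (sdiff_subset.trans (subset_union_right.trans hcover))
  refine ⟨s ∪ t, fun x hx => ?_⟩
  simp only [Finset.set_biUnion_union, mem_union]
  by_cases hxs : x ∈ ⋃ i ∈ s, U i
  · exact .inl hxs
  · exact .inr (ht ⟨hx.resolve_left fun hxK => hxs (hs hxK), hxs⟩)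

namespace SorgenfreyLine

theorem isOpen_Ico (a b : ℝₗ) : IsOpen (Ico a b) := by
  rcases lt_or_ge a b with hab | hba
  · exact .basic _ ⟨a, b, hab, rfl⟩
  · rw [Ico_eq_empty_of_le hba]
    exact isOpen_empty

theorem isOpen_Iio (a : ℝₗ) : IsOpen (Iio a) :=
  (iUnion_Ico_eq_Iio_self_iff (f := fun b : Iio a => (b : ℝₗ))).2 (fun x hx => ⟨⟨x, hx⟩, le_rfl⟩) ▸
    isOpen_iUnion fun b : Iio a => isOpen_Ico b a

theorem isOpen_Ici (a : ℝₗ) : IsOpen (Ici a) :=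
  iUnion_Ico_right a ▸ isOpen_iUnion fun b => isOpen_Ico a b

theorem exists_Ico_subset_of_isOpen {O : Set ℝₗ} (hO : IsOpen O) {x : ℝₗ} (hx : x ∈ O) :
    ∃ ε > 0, Ico x (x + ε) ⊆ O := by
  induction hO with
  | basic s hs =>
    obtain ⟨a, b, -, rfl⟩ := hs
    exact ⟨b - x, sub_pos.2 hx.2, fun y hy => ⟨hx.1.trans hy.1, by linarith [hy.2]⟩⟩
  | univ => exact ⟨1, one_pos, subset_univ _⟩
  | inter s t _ _ ihs iht =>
    obtain ⟨ε, hε, hεs⟩ := ihs hx.1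
    obtain ⟨η, hη, hηt⟩ := iht hx.2
    refine ⟨min ε η, lt_min hε hη, subset_inter ?_ ?_⟩
    · exact (Ico_subset_Ico_right (by gcongr; exact min_le_left _ _)).trans hεs
    · exact (Ico_subset_Ico_right (by gcongr; exact min_le_right _ _)).trans hηt
  | sUnion S _ ih =>
    obtain ⟨s, hsS, hxs⟩ := hx
    obtain ⟨ε, hε, hεs⟩ := ih s hsS hxs
    exact ⟨ε, hε, hεs.trans (subset_sUnion_of_mem hsS)⟩

variable {K : Set ℝₗ}

theorem bddAbove_of_isCompact (hK : IsCompact K) : BddAbove K := by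
  obtain ⟨b, hb⟩ := hK.elim_directed_cover Iio isOpen_Iio
    (fun x _ => mem_iUnion.2 ⟨x + 1, lt_add_one x⟩) monotone_Iio.directed_le
  exact ⟨b, fun x hx => (hb hx).le⟩

theorem exists_isGreatest_of_isCompact (hK : IsCompact K) {S : Set ℝₗ} (hSK : S ⊆ K)
    (hS : S.Nonempty) : ∃ g, IsGreatest S g := by
  obtain ⟨s, hs⟩ : ∃ s, IsLUB S s := ⟨_, isLUB_csSup hS ((bddAbove_of_isCompact hK).mono hSK)⟩
  by_contra! hno
  have hlt : ∀ z ∈ S, z < s := fun z hz =>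
    (hs.1 hz).lt_of_ne fun h => hno s ⟨h ▸ hz, hs.1⟩
  obtain ⟨z, hz⟩ := hS
  have : Nonempty (Iio s) := ⟨⟨z, hlt z hz⟩⟩
  -- `s ∉ S`, so the increasing open sets `Iio t ∪ Ici s`, `t < s`, cover `K`, and one of them
  -- would already contain `S`, putting `S` below `t < s`
  have hcover : K ⊆ ⋃ t : Iio s, Iio (t : ℝₗ) ∪ Ici s := by
    intro x _
    rcases lt_or_ge x s with hx | hx
    · obtain ⟨t, hxt, hts⟩ := exists_between hx
      exact mem_iUnion.2 ⟨⟨t, hts⟩, .inl hxt⟩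
    · exact mem_iUnion.2 ⟨⟨z, hlt z hz⟩, .inr hx⟩
  obtain ⟨t, ht⟩ := hK.elim_directed_cover _ (fun t : Iio s => (isOpen_Iio t).union (isOpen_Ici s))
    hcover (Monotone.directed_le fun a b hab => union_subset_union_left _ (Iio_subset_Iio hab))
  have hst : s ≤ t := hs.2 fun y hy => ((hSK.trans ht) hy).elim (fun hyt => (mem_Iio.1 hyt).le)
    fun hsy => absurd (hlt y hy) (not_lt.2 hsy)
  exact (not_lt.2 hst) t.2

theorem exists_forall_Ico_subset_of_isCompact (hK : IsCompact K) {U : Set ℝₗ} (hU : IsOpen U)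
    (hKU : K ⊆ U) : ∃ n : ℕ, ∀ x ∈ K, Ico x (x + 1 / (n + 1)) ⊆ U := by
  have hcover : K ⊆ ⋃ n : ℕ, interior {y | Ico y (y + 1 / (n + 1)) ⊆ U} := by
    intro x hx
    obtain ⟨ε, hε, hεU⟩ := exists_Ico_subset_of_isOpen hU (hKU hx)
    obtain ⟨n, hn⟩ := exists_nat_one_div_lt (half_pos hε)
    have hsub : Ico x (x + 1 / (n + 1)) ⊆ {y | Ico y (y + 1 / (n + 1)) ⊆ U} :=
      fun y hy z hz => hεU ⟨hy.1.trans hz.1, by linarith [hy.2, hz.2]⟩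
    exact mem_iUnion.2 ⟨n, interior_maximal hsub (isOpen_Ico _ _)
      (left_mem_Ico.2 (lt_add_of_pos_right x Nat.one_div_pos_of_nat))⟩
  obtain ⟨n, hn⟩ := hK.elim_directed_cover _ (fun _ => isOpen_interior) hcover
    (Monotone.directed_le fun m n hmn =>
      interior_mono fun y hy => (Ico_subset_Ico_right (by gcongr)).trans hy)
  exact ⟨n, fun x hx => interior_subset (hn hx)⟩

def rightGaps (K : Set ℝₗ) (δ : ℝₗ) : Set ℝₗ := {x ∈ K | K ∩ Ioo x (x + δ) = ∅}

theorem finite_rightGaps (hK : IsCompact K) {δ : ℝₗ} (hδ : 0 < δ) : (rightGaps K δ).Finite := by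
  obtain ⟨t, -, hKt⟩ := hK.elim_nhds_subcover (fun x => Ico x (x + δ))
    fun x _ => (isOpen_Ico _ _).mem_nhds (left_mem_Ico.2 (lt_add_of_pos_right x hδ))
  -- two points of `rightGaps K δ` in the same interval `[x, x + δ)` would contradict the gap
  -- after the smaller one
  have hle : ∀ x, ∀ y ∈ rightGaps K δ ∩ Ico x (x + δ), ∀ z ∈ rightGaps K δ ∩ Ico x (x + δ),
      y ≤ z := fun x y hy z hz => not_lt.1 fun hzy =>
    eq_empty_iff_forall_notMem.1 hz.1.2 y ⟨hy.1.1, hzy, by linarith [hy.2.2, hz.2.1]⟩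
  refine (t.finite_toSet.biUnion fun x _ =>
    Subsingleton.finite fun y hy z hz => le_antisymm (hle x y hy z hz) (hle x z hz y hy)).subset
    fun y hy => ?_
  obtain ⟨x, hxt, hyx⟩ := mem_iUnion₂.1 (hKt hy.1)
  exact mem_iUnion₂.2 ⟨x, hxt, hy, hyx⟩

noncomputable def ratAbove (x : ℝₗ) (n : ℕ) : ℚ :=
  (exists_rat_btwn (lt_add_of_pos_right x (Nat.one_div_pos_of_nat (n := n)))).choose

theorem ratAbove_mem_Ioo (x : ℝₗ) (n : ℕ) : (ratAbove x n : ℝₗ) ∈ Ioo x (x + 1 / (n + 1)) :=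
  (exists_rat_btwn (lt_add_of_pos_right x (Nat.one_div_pos_of_nat (n := n)))).choose_spec

def ratFilling (K : Set ℝₗ) : Set ℝₗ :=
  K ∪ ⋃ n : ℕ, (fun x => (ratAbove x n : ℝₗ)) '' rightGaps K (1 / (n + 1))

theorem isCompact_ratFilling (hK : IsCompact K) : IsCompact (ratFilling K) := by
  refine isCompact_union_of_finite_diff hK fun U hU hKU => ?_
  obtain ⟨N, hN⟩ := exists_forall_Ico_subset_of_isCompact hK hU hKU
  refine ((finite_lt_nat N).biUnion fun n _ =>
    (finite_rightGaps hK (Nat.one_div_pos_of_nat (n := n))).image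
      fun x => (ratAbove x n : ℝₗ)).subset ?_
  rintro _ ⟨hr, hrU⟩
  obtain ⟨n, x, hx, rfl⟩ := mem_iUnion.1 hr
  have hq := ratAbove_mem_Ioo x n
  refine mem_iUnion₂.2 ⟨n, show n < N from not_le.1 fun hNn => hrU (hN x hx.1 ⟨hq.1.le, ?_⟩),
    mem_image_of_mem _ hx⟩
  calc (ratAbove x n : ℝₗ) < x + 1 / (n + 1) := hq.2
    _ ≤ x + 1 / (N + 1) := by gcongr

theorem ratFilling_subset_closure (hK : IsCompact K) :
    ratFilling K ⊆ closure (range (fun q : ℚ => (q : ℝₗ)) ∩ ratFilling K) := by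
  rintro x (hx | hx)
  · refine mem_closure_iff.2 fun O hO hxO => ?_
    obtain ⟨ε, hε, hεO⟩ := exists_Ico_subset_of_isOpen hO hxO
    obtain ⟨y, ⟨hyK, hxy, hyε⟩, hy⟩ := exists_isGreatest_of_isCompact hK inter_subset_left
      ⟨x, hx, left_mem_Ico.2 (lt_add_of_pos_right x hε)⟩
    obtain ⟨n, hn⟩ := exists_nat_one_div_lt (sub_pos.2 hyε)
    have hgap : y ∈ rightGaps K (1 / (n + 1)) := ⟨hyK, eq_empty_iff_forall_notMem.2 fun z hz =>
      not_lt.2 (hy ⟨hz.1, hxy.trans hz.2.1.le, by linarith [hz.2.2]⟩) hz.2.1⟩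
    have hq := ratAbove_mem_Ioo y n
    exact ⟨ratAbove y n, hεO ⟨hxy.trans hq.1.le, by linarith [hq.2]⟩, mem_range_self _,
      .inr (mem_iUnion.2 ⟨n, mem_image_of_mem _ hgap⟩)⟩
  · obtain ⟨n, y, -, rfl⟩ := mem_iUnion.1 hx
    exact subset_closure ⟨mem_range_self _, .inr hx⟩

end SorgenfreyLine

/-- The rationals are $k$-dense in the Sorgenfrey line; in particular the Sorgenfrey line is
$k$-separable. -/
theorem rat_kDense_sorgenfrey :
    IsKDense (Set.range (fun q : ℚ => (q : ℝₗ))) ∧ KSeparable ℝₗ := by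
  have hkd : IsKDense (Set.range (fun q : ℚ => (q : ℝₗ))) := fun K hK =>
    ⟨SorgenfreyLine.ratFilling K, SorgenfreyLine.isCompact_ratFilling hK, subset_union_left,
      SorgenfreyLine.ratFilling_subset_closure hK⟩
  exact ⟨hkd, _, countable_range _, hkd⟩
end
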